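/- arXiv:2401.00838 — 3 statements merged into one kernel-verified Lean document; each statement's English description precedes it below -/
import Mathlib

section
/- A vector v ∈ 𝔳 satisfies the J²-condition if and only if the subspace ℝv + J_𝔷v of 𝔳 is invariant under J_z for every z ∈ 𝔷 (equivalently, the Clifford submodule of 𝔳 generated by v, i.e. the smallest subspace containing v that is invariant under all J_z, equals ℝv ⊕ J_𝔷v). -/
/-!
Polarizing `‖J_z u‖ = ‖z‖‖u‖` in `u` and in `z`, and combining with `J_z² = -‖z‖²`, shows that
each `J_z` is skew and that `⟪J_{z₁} J_{z₂} v, v⟫ = -‖v‖² ⟪z₁, z₂⟫`. Hence, if `ℝv + J_𝔷v` is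
`J`-invariant, `J_{z₁} J_{z₂} v = a v + J_{z₃} v` with `a = 0` as soon as `z₁ ⊥ z₂`.
Conversely, splitting `z = c z' + r` with `r ⊥ z'` gives
`J_z J_{z'} v = -c‖z'‖² v + J_r J_{z'} v`, and the `J²`-condition puts the last term in `J_𝔷v`.
-/

open RealInnerProductSpace

section Clifford

variable {V Z : Type*} [NormedAddCommGroup V] [InnerProductSpace ℝ V]
  [NormedAddCommGroup Z] [InnerProductSpace ℝ Z]

theorem inner_map_map_of_norm_map_eq_mul {E F : Type*} [NormedAddCommGroup E]
    [InnerProductSpace ℝ E] [NormedAddCommGroup F] [InnerProductSpace ℝ F]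
    (f : E →ₗ[ℝ] F) (c : ℝ) (hf : ∀ x, ‖f x‖ = c * ‖x‖) (x y : E) :
    ⟪f x, f y⟫ = c ^ 2 * ⟪x, y⟫ := by
  rw [real_inner_eq_norm_add_mul_self_sub_norm_mul_self_sub_norm_mul_self_div_two,
    real_inner_eq_norm_add_mul_self_sub_norm_mul_self_sub_norm_mul_self_div_two x y,
    ← map_add, hf, hf, hf]
  ring

theorem inner_apply_apply_left_of_norm_apply (J : Z →ₗ[ℝ] V →ₗ[ℝ] V)
    (hJnorm : ∀ z v, ‖J z v‖ = ‖z‖ * ‖v‖) (z₁ z₂ : Z) (v : V) :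
    ⟪J z₁ v, J z₂ v⟫ = ‖v‖ ^ 2 * ⟪z₁, z₂⟫ :=
  inner_map_map_of_norm_map_eq_mul (J.flip v) ‖v‖
    (fun z => (hJnorm z v).trans (mul_comm _ _)) z₁ z₂

theorem inner_apply_left_eq_neg_inner_apply_right (J : Z →ₗ[ℝ] V →ₗ[ℝ] V)
    (hJsq : ∀ z v, J z (J z v) = -(‖z‖ ^ 2) • v) (hJnorm : ∀ z v, ‖J z v‖ = ‖z‖ * ‖v‖)
    (z : Z) (u w : V) : ⟪J z u, w⟫ = -⟪u, J z w⟫ := by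
  have hisom := inner_map_map_of_norm_map_eq_mul (J z) ‖z‖ (hJnorm z)
  have h : ‖z‖ ^ 2 * ⟪J z u, w⟫ = ‖z‖ ^ 2 * -⟪u, J z w⟫ :=
    calc ‖z‖ ^ 2 * ⟪J z u, w⟫ = ⟪J z (J z u), J z w⟫ := (hisom _ _).symm
      _ = ‖z‖ ^ 2 * -⟪u, J z w⟫ := by rw [hJsq, real_inner_smul_left]; ring
  rcases eq_or_ne z 0 with rfl | hz
  · simp
  · exact mul_left_cancel₀ (by positivity) h

theorem inner_apply_apply_self (J : Z →ₗ[ℝ] V →ₗ[ℝ] V)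
    (hJsq : ∀ z v, J z (J z v) = -(‖z‖ ^ 2) • v) (hJnorm : ∀ z v, ‖J z v‖ = ‖z‖ * ‖v‖)
    (z₁ z₂ : Z) (v : V) : ⟪J z₁ (J z₂ v), v⟫ = -(‖v‖ ^ 2 * ⟪z₁, z₂⟫) := by
  rw [inner_apply_left_eq_neg_inner_apply_right J hJsq hJnorm, real_inner_comm,
    inner_apply_apply_left_of_norm_apply J hJnorm, real_inner_comm]

theorem inner_apply_self_eq_zero (J : Z →ₗ[ℝ] V →ₗ[ℝ] V)
    (hJsq : ∀ z v, J z (J z v) = -(‖z‖ ^ 2) • v) (hJnorm : ∀ z v, ‖J z v‖ = ‖z‖ * ‖v‖)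
    (z : Z) (v : V) : ⟪J z v, v⟫ = 0 := by
  have h := inner_apply_left_eq_neg_inner_apply_right J hJsq hJnorm z v v
  rw [real_inner_comm (J z v) v] at h
  linarith

def JSqCondition (J : Z →ₗ[ℝ] V →ₗ[ℝ] V) (v : V) : Prop :=
  ∀ z₁ z₂ : Z, ⟪z₁, z₂⟫ = 0 → ∃ z₃ : Z, J z₁ (J z₂ v) = J z₃ v

/-- The subspace `ℝv + J_𝔷v`. -/
def jSpan (J : Z →ₗ[ℝ] V →ₗ[ℝ] V) (v : V) : Submodule ℝ V :=
  (ℝ ∙ v) ⊔ LinearMap.range (J.flip v)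

theorem mem_jSpan_iff {J : Z →ₗ[ℝ] V →ₗ[ℝ] V} {v x : V} :
    x ∈ jSpan J v ↔ ∃ (a : ℝ) (z : Z), a • v + J z v = x := by
  simp only [jSpan, Submodule.mem_sup, Submodule.mem_span_singleton, LinearMap.mem_range,
    LinearMap.flip_apply]
  constructor
  · rintro ⟨_, ⟨a, rfl⟩, _, ⟨z, rfl⟩, rfl⟩
    exact ⟨a, z, rfl⟩
  · rintro ⟨a, z, rfl⟩
    exact ⟨_, ⟨a, rfl⟩, _, ⟨z, rfl⟩, rfl⟩

theorem apply_mem_jSpan (J : Z →ₗ[ℝ] V →ₗ[ℝ] V) (z : Z) (v : V) : J z v ∈ jSpan J v :=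
  mem_jSpan_iff.2 ⟨0, z, by rw [zero_smul, zero_add]⟩

theorem apply_apply_mem_jSpan (J : Z →ₗ[ℝ] V →ₗ[ℝ] V)
    (hJsq : ∀ z v, J z (J z v) = -(‖z‖ ^ 2) • v) {v : V} (hv : JSqCondition J v) (z z' : Z) :
    J z (J z' v) ∈ jSpan J v := by
  obtain ⟨c, hperp⟩ : ∃ c : ℝ, ⟪z - c • z', z'⟫ = 0 := by
    rcases eq_or_ne z' 0 with rfl | hz'
    · exact ⟨0, inner_zero_right _⟩
    · refine ⟨⟪z, z'⟫ / ‖z'‖ ^ 2, ?_⟩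
      rw [inner_sub_left, real_inner_smul_left, real_inner_self_eq_norm_sq,
        div_mul_cancel₀ _ (pow_ne_zero 2 (norm_ne_zero_iff.2 hz')), sub_self]
  obtain ⟨z₃, hz₃⟩ := hv (z - c • z') z' hperp
  have hsplit : J z (J z' v) = (-(c * ‖z'‖ ^ 2)) • v + J z₃ v := by
    rw [show z = c • z' + (z - c • z') by abel, map_add, LinearMap.add_apply, hz₃, map_smul,
      LinearMap.smul_apply, hJsq, smul_smul, mul_neg]
  exact mem_jSpan_iff.2 ⟨_, z₃, hsplit.symm⟩

theorem map_jSpan_le_of_jSqCondition (J : Z →ₗ[ℝ] V →ₗ[ℝ] V)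
    (hJsq : ∀ z v, J z (J z v) = -(‖z‖ ^ 2) • v) {v : V} (hv : JSqCondition J v) (z : Z) :
    (jSpan J v).map (J z) ≤ jSpan J v := by
  rintro _ ⟨x, hx, rfl⟩
  obtain ⟨a, z', rfl⟩ := mem_jSpan_iff.1 hx
  rw [map_add, map_smul]
  exact add_mem (Submodule.smul_mem _ a (apply_mem_jSpan J z v))
    (apply_apply_mem_jSpan J hJsq hv z z')

theorem jSqCondition_of_map_jSpan_le (J : Z →ₗ[ℝ] V →ₗ[ℝ] V)
    (hJsq : ∀ z v, J z (J z v) = -(‖z‖ ^ 2) • v) (hJnorm : ∀ z v, ‖J z v‖ = ‖z‖ * ‖v‖)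
    {v : V} (hinv : ∀ z, (jSpan J v).map (J z) ≤ jSpan J v) : JSqCondition J v := by
  intro z₁ z₂ hperp
  obtain ⟨a, z₃, hx⟩ := mem_jSpan_iff.1
    (hinv z₁ (Submodule.mem_map_of_mem (apply_mem_jSpan J z₂ v)))
  have hinner := inner_apply_apply_self J hJsq hJnorm z₁ z₂ v
  rw [← hx, hperp, inner_add_left, real_inner_smul_left, inner_apply_self_eq_zero J hJsq hJnorm,
    real_inner_self_eq_norm_sq] at hinner
  have hav : a • v = 0 := by
    rcases mul_eq_zero.1 (show a * ‖v‖ ^ 2 = 0 by linarith) with ha | hv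
    · rw [ha, zero_smul]
    · rw [norm_eq_zero.1 (pow_eq_zero_iff two_ne_zero |>.1 hv), smul_zero]
  exact ⟨z₃, by rw [← hx, hav, zero_add]⟩

theorem jSqCondition_iff_map_jSpan_le (J : Z →ₗ[ℝ] V →ₗ[ℝ] V)
    (hJsq : ∀ z v, J z (J z v) = -(‖z‖ ^ 2) • v) (hJnorm : ∀ z v, ‖J z v‖ = ‖z‖ * ‖v‖)
    (v : V) : JSqCondition J v ↔ ∀ z, (jSpan J v).map (J z) ≤ jSpan J v :=
  ⟨map_jSpan_le_of_jSqCondition J hJsq, jSqCondition_of_map_jSpan_le J hJsq hJnorm⟩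

end Clifford

theorem stmt_4_general
    {𝕍 𝕫 : Type*} [NormedAddCommGroup 𝕍] [InnerProductSpace ℝ 𝕍]
    [NormedAddCommGroup 𝕫] [InnerProductSpace ℝ 𝕫]
    (J : 𝕫 →ₗ[ℝ] 𝕍 →ₗ[ℝ] 𝕍)
    (hJsq : ∀ (z : 𝕫) (v : 𝕍), J z (J z v) = -(‖z‖ ^ 2) • v)
    (hJnorm : ∀ (z : 𝕫) (v : 𝕍), ‖J z v‖ = ‖z‖ * ‖v‖)
    (v : 𝕍) :
    (∀ z₁ z₂ : 𝕫, ⟪z₁, z₂⟫ = 0 → ∃ z₃ : 𝕫, J z₁ (J z₂ v) = J z₃ v) ↔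
      (∀ z : 𝕫, Submodule.map (J z) ((ℝ ∙ v) ⊔ LinearMap.range (J.flip v)) ≤
        (ℝ ∙ v) ⊔ LinearMap.range (J.flip v)) :=
  jSqCondition_iff_map_jSpan_le J hJsq hJnorm v

/-- A vector `v ∈ 𝔳` satisfies the `J²`-condition iff the subspace `ℝv + J_𝔷v` of `𝔳`
is invariant under `J_z` for every `z ∈ 𝔷` (i.e. the Clifford submodule generated by `v`
equals `ℝv ⊕ J_𝔷v`). -/
theorem stmt_4
    {𝕍 𝕫 : Type*} [NormedAddCommGroup 𝕍] [InnerProductSpace ℝ 𝕍] [FiniteDimensional ℝ 𝕍]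
    [NormedAddCommGroup 𝕫] [InnerProductSpace ℝ 𝕫] [FiniteDimensional ℝ 𝕫]
    (J : 𝕫 →ₗ[ℝ] 𝕍 →ₗ[ℝ] 𝕍)
    (hJsq : ∀ (z : 𝕫) (v : 𝕍), J z (J z v) = -(‖z‖ ^ 2) • v)
    (hJnorm : ∀ (z : 𝕫) (v : 𝕍), ‖J z v‖ = ‖z‖ * ‖v‖)
    (br : 𝕍 →ₗ[ℝ] 𝕍 →ₗ[ℝ] 𝕫)
    (hbr : ∀ (U V : 𝕍) (Z : 𝕫), ⟪br U V, Z⟫ = ⟪J Z U, V⟫)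
    (v : 𝕍) :
    (∀ z₁ z₂ : 𝕫, ⟪z₁, z₂⟫ = 0 → ∃ z₃ : 𝕫, J z₁ (J z₂ v) = J z₃ v) ↔
      (∀ z : 𝕫, Submodule.map (J z) ((ℝ ∙ v) ⊔ LinearMap.range (J.flip v)) ≤
        (ℝ ∙ v) ⊔ LinearMap.range (J.flip v)) :=
  stmt_4_general J hJsq hJnorm v
end

section
/- Fix x₀ = (V₀, Z₀, t₀) ∈ 𝔳 × 𝔷 × ℝ. For every (V, Z, t) ∈ 𝔳 × 𝔷 × ℝ with t > 0, setting K = t + t₀ + ‖(V−V₀)/2‖², W = Z − Z₀ + ½[V, V₀], and D = (K² + ‖W‖²)/t, one has (1/t)·‖K·(V−V₀) + J_W(V−V₀)‖² + 4‖W‖² + (2K − D)² = D² − 4t₀·D. (This identity states that the squared norm of the gradient of the distorted distance function D_{x₀} with respect to the left-invariant Damek–Ricci metric, computed in the left-invariant orthonormal frame, equals D_{x₀}² − 4t₀·D_{x₀}; it is the transnormality part of the theorem that D_{x₀} is an isoparametric function for every x₀.) -/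
/-!
Since `J_W² = -‖W‖²` and `J_W` scales norms by `‖W‖`, the map `J_W` is skew-adjoint, so
`‖K U + J_W U‖² = (K² + ‖W‖²) ‖U‖² = t D ‖U‖²` for `U = V - V₀`. As `‖U‖² = 4 (K - t - t₀)`,
the identity becomes a polynomial identity in `K`, `‖W‖²`, `t`, `t₀` and `D`.
-/

open RealInnerProductSpace

section Skew

variable {E : Type*} [NormedAddCommGroup E] [InnerProductSpace ℝ E]

theorem inner_map_map_of_norm_map_eq_mul_s10 {T : E →ₗ[ℝ] E} {c : ℝ}
    (hT : ∀ v, ‖T v‖ = c * ‖v‖) (u v : E) : ⟪T u, T v⟫ = c ^ 2 * ⟪u, v⟫ := by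
  have hnorm_sq : ∀ w, ‖T w‖ ^ 2 = c ^ 2 * ‖w‖ ^ 2 := fun w => by rw [hT]; ring
  have hsum := hnorm_sq (u + v)
  rw [map_add, norm_add_sq_real, norm_add_sq_real, hnorm_sq, hnorm_sq] at hsum
  linarith

theorem inner_map_self_eq_zero_of_map_map_eq_neg {T : E →ₗ[ℝ] E} {c : ℝ}
    (hsq : ∀ v, T (T v) = -(c ^ 2) • v) (hT : ∀ v, ‖T v‖ = c * ‖v‖) (u : E) :
    ⟪T u, u⟫ = 0 := by
  rcases eq_or_ne c 0 with rfl | hc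
  · simp [norm_eq_zero.mp (by simpa using hT u : ‖T u‖ = 0)]
  · -- `c² ⟪T u, u⟫ = ⟪T (T u), T u⟫ = -c² ⟪u, T u⟫`
    have h := inner_map_map_of_norm_map_eq_mul_s10 hT u (T u)
    rw [hsq, real_inner_smul_right, real_inner_comm (T u) u] at h
    have : c ^ 2 * (2 * ⟪T u, u⟫) = 0 := by linarith
    simpa [hc] using this

theorem norm_smul_add_map_sq {T : E →ₗ[ℝ] E} {c : ℝ}
    (hsq : ∀ v, T (T v) = -(c ^ 2) • v) (hT : ∀ v, ‖T v‖ = c * ‖v‖) (k : ℝ) (u : E) :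
    ‖k • u + T u‖ ^ 2 = (k ^ 2 + c ^ 2) * ‖u‖ ^ 2 := by
  rw [norm_add_sq_real, real_inner_smul_left, real_inner_comm,
    inner_map_self_eq_zero_of_map_map_eq_neg hsq hT, norm_smul, hT, Real.norm_eq_abs,
    mul_pow, sq_abs]
  ring

end Skew

theorem transnormality_scalar_identity {t t₀ K w D : ℝ} (ht : t ≠ 0)
    (hD : D = (K ^ 2 + w) / t) :
    (1 / t) * ((K ^ 2 + w) * (4 * (K - t - t₀))) + 4 * w + (2 * K - D) ^ 2 =
      D ^ 2 - 4 * t₀ * D := by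
  have hDt : K ^ 2 + w = D * t := by rw [hD]; field_simp
  rw [hDt]
  field_simp
  linear_combination 4 * hDt

theorem stmt_10_general
    {𝕍 𝕫 : Type*} [NormedAddCommGroup 𝕍] [InnerProductSpace ℝ 𝕍]
    [NormedAddCommGroup 𝕫] [InnerProductSpace ℝ 𝕫]
    (J : 𝕫 →ₗ[ℝ] 𝕍 →ₗ[ℝ] 𝕍)
    (hJsq : ∀ (z : 𝕫) (v : 𝕍), J z (J z v) = -(‖z‖ ^ 2) • v)
    (hJnorm : ∀ (z : 𝕫) (v : 𝕍), ‖J z v‖ = ‖z‖ * ‖v‖)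
    (V₀ V : 𝕍) (t₀ t : ℝ) (ht : 0 < t)
    (K D : ℝ) (W : 𝕫)
    (hK : K = t + t₀ + ‖(1 / 2 : ℝ) • (V - V₀)‖ ^ 2)
    (hD : D = (K ^ 2 + ‖W‖ ^ 2) / t) :
    (1 / t) * ‖K • (V - V₀) + J W (V - V₀)‖ ^ 2 + 4 * ‖W‖ ^ 2 + (2 * K - D) ^ 2 =
      D ^ 2 - 4 * t₀ * D := by
  have hU : ‖V - V₀‖ ^ 2 = 4 * (K - t - t₀) := by
    rw [hK, norm_smul, Real.norm_eq_abs, abs_of_pos (by norm_num : (0 : ℝ) < 1 / 2)]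
    ring
  rw [norm_smul_add_map_sq (hJsq W) (hJnorm W), hU]
  exact transnormality_scalar_identity ht.ne' hD

/-- Transnormality identity for the distorted distance function `D_{x₀}` of a
Damek–Ricci space: with `K = t + t₀ + ‖(V-V₀)/2‖²`, `W = Z - Z₀ + ½[V,V₀]` and
`D = (K² + ‖W‖²)/t`, one has
`(1/t) ‖K (V-V₀) + J_W (V-V₀)‖² + 4‖W‖² + (2K - D)² = D² - 4 t₀ D`,
i.e. `‖∇ D_{x₀}‖² = D_{x₀}² - 4 t₀ D_{x₀}`. -/
theorem stmt_10
    {𝕍 𝕫 : Type*} [NormedAddCommGroup 𝕍] [InnerProductSpace ℝ 𝕍] [FiniteDimensional ℝ 𝕍]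
    [NormedAddCommGroup 𝕫] [InnerProductSpace ℝ 𝕫] [FiniteDimensional ℝ 𝕫]
    (J : 𝕫 →ₗ[ℝ] 𝕍 →ₗ[ℝ] 𝕍)
    (hJsq : ∀ (z : 𝕫) (v : 𝕍), J z (J z v) = -(‖z‖ ^ 2) • v)
    (hJnorm : ∀ (z : 𝕫) (v : 𝕍), ‖J z v‖ = ‖z‖ * ‖v‖)
    (br : 𝕍 →ₗ[ℝ] 𝕍 →ₗ[ℝ] 𝕫)
    (hbr : ∀ (U V : 𝕍) (Z : 𝕫), ⟪br U V, Z⟫ = ⟪J Z U, V⟫)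
    (V₀ V : 𝕍) (Z₀ Z : 𝕫) (t₀ t : ℝ) (ht : 0 < t)
    (K D : ℝ) (W : 𝕫)
    (hK : K = t + t₀ + ‖(1 / 2 : ℝ) • (V - V₀)‖ ^ 2)
    (hW : W = Z - Z₀ + (1 / 2 : ℝ) • br V V₀)
    (hD : D = (K ^ 2 + ‖W‖ ^ 2) / t) :
    (1 / t) * ‖K • (V - V₀) + J W (V - V₀)‖ ^ 2 + 4 * ‖W‖ ^ 2 + (2 * K - D) ^ 2 =
      D ^ 2 - 4 * t₀ * D :=
  stmt_10_general J hJsq hJnorm V₀ V t₀ t ht K D W hK hD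
end

section
/- Let (v, z, s) ∈ 𝔳 × 𝔷 × ℝ be a unit vector (‖v‖² + ‖z‖² + s² = 1) with s² + ‖z‖² ≠ 0, and set V₀ = −(2s/(s²+‖z‖²))·v + (2/(s²+‖z‖²))·J_z(v) and t₀ = −1/(s²+‖z‖²) (so that the prolonged geodesic γ satisfies γ(∞) = (V₀, 0, t₀)). Then t₀ = −1 − ¼‖V₀‖², so the point e = (0,0,1) lies on the focal variety F_{(V₀,0,t₀)}, and v = −½(s·V₀ + J_z(V₀)), so the initial velocity (v, z, s) of γ is orthogonal to the tangent space T_e F_{(V₀,0,t₀)} = {(v', z', s') : s' = ½⟨v', V₀⟩, z' = −½[v', V₀]}. -/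
/-!
Everything follows from the identity `(s + J_z)(-s + J_z) = -(s² + ‖z‖²)`, which says that
`s V₀ + J_z V₀ = -2 v`, together with the skew-symmetry of `J_z`, which makes `s + J_z` a
conformal map with `‖s u + J_z u‖² = (s² + ‖z‖²) ‖u‖²`. Together they give
`‖V₀‖² = 4‖v‖² / (s² + ‖z‖²)` and hence `t₀ = -1 - ¼‖V₀‖²`. Paired with a tangent vector
`(v', -½[v', V₀], ½⟨v', V₀⟩)`, the velocity gives `⟨v, v'⟩ + ½⟨v', s V₀ + J_z V₀⟩ = 0`,
because `⟨z, [v', V₀]⟩ = ⟨J_z v', V₀⟩ = -⟨v', J_z V₀⟩`.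
-/

open RealInnerProductSpace

section Conformal

variable {E F : Type*} [NormedAddCommGroup E] [InnerProductSpace ℝ E]
  [NormedAddCommGroup F] [InnerProductSpace ℝ F]

theorem real_inner_map_map_of_norm_map_eq_mul (f : E →ₗ[ℝ] F) (c : ℝ)
    (hf : ∀ x, ‖f x‖ = c * ‖x‖) (x y : E) : ⟪f x, f y⟫ = c ^ 2 * ⟪x, y⟫ := by
  rw [real_inner_eq_norm_add_mul_self_sub_norm_mul_self_sub_norm_mul_self_div_two, ← map_add,
    hf, hf, hf, real_inner_eq_norm_add_mul_self_sub_norm_mul_self_sub_norm_mul_self_div_two x y]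
  ring

theorem real_inner_map_left_eq_neg_of_map_map (f : E →ₗ[ℝ] E) {c : ℝ} (hc : c ≠ 0)
    (hsq : ∀ x, f (f x) = -c ^ 2 • x) (hf : ∀ x, ‖f x‖ = c * ‖x‖) (x y : E) :
    ⟪f x, y⟫ = -⟪x, f y⟫ := by
  have h := real_inner_map_map_of_norm_map_eq_mul f c hf x (f y)
  rw [hsq, inner_smul_right] at h
  apply mul_left_cancel₀ (pow_ne_zero 2 hc)
  linear_combination -h

end Conformal

section CliffordModule

variable {𝕍 𝕫 : Type*} [NormedAddCommGroup 𝕍] [InnerProductSpace ℝ 𝕍]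
  [NormedAddCommGroup 𝕫] [InnerProductSpace ℝ 𝕫]

theorem real_inner_J_left_eq_neg (J : 𝕫 →ₗ[ℝ] 𝕍 →ₗ[ℝ] 𝕍)
    (hJsq : ∀ (z : 𝕫) (v : 𝕍), J z (J z v) = -(‖z‖ ^ 2) • v)
    (hJnorm : ∀ (z : 𝕫) (v : 𝕍), ‖J z v‖ = ‖z‖ * ‖v‖) (z : 𝕫) (u u' : 𝕍) :
    ⟪J z u, u'⟫ = -⟪u, J z u'⟫ := by
  rcases eq_or_ne z 0 with rfl | hz
  · simp
  · exact real_inner_map_left_eq_neg_of_map_map (J z) (norm_ne_zero_iff.mpr hz) (hJsq z)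
      (hJnorm z) u u'

theorem norm_smul_add_J_sq (J : 𝕫 →ₗ[ℝ] 𝕍 →ₗ[ℝ] 𝕍)
    (hJsq : ∀ (z : 𝕫) (v : 𝕍), J z (J z v) = -(‖z‖ ^ 2) • v)
    (hJnorm : ∀ (z : 𝕫) (v : 𝕍), ‖J z v‖ = ‖z‖ * ‖v‖) (s : ℝ) (z : 𝕫) (u : 𝕍) :
    ‖s • u + J z u‖ ^ 2 = (s ^ 2 + ‖z‖ ^ 2) * ‖u‖ ^ 2 := by
  have horth : ⟪u, J z u⟫ = 0 := by
    have hskew := real_inner_J_left_eq_neg J hJsq hJnorm z u u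
    rw [real_inner_comm] at hskew
    linarith
  rw [norm_add_sq_real, real_inner_smul_left, horth, mul_zero, mul_zero, norm_smul, hJnorm,
    Real.norm_eq_abs, mul_pow, mul_pow, sq_abs]
  ring

theorem smul_add_J_endpoint_eq_neg_two_smul (J : 𝕫 →ₗ[ℝ] 𝕍 →ₗ[ℝ] 𝕍)
    (hJsq : ∀ (z : 𝕫) (v : 𝕍), J z (J z v) = -(‖z‖ ^ 2) • v) {v : 𝕍} {z : 𝕫} {s : ℝ}
    (hsz : s ^ 2 + ‖z‖ ^ 2 ≠ 0) :
    s • ((-(2 * s / (s ^ 2 + ‖z‖ ^ 2))) • v + (2 / (s ^ 2 + ‖z‖ ^ 2)) • J z v)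
      + J z ((-(2 * s / (s ^ 2 + ‖z‖ ^ 2))) • v + (2 / (s ^ 2 + ‖z‖ ^ 2)) • J z v)
      = (-2 : ℝ) • v := by
  rw [smul_add, map_add, map_smul, map_smul, hJsq]
  match_scalars <;> field_simp <;> ring

theorem inner_velocity_tangent_eq_zero (J : 𝕫 →ₗ[ℝ] 𝕍 →ₗ[ℝ] 𝕍)
    (hJsq : ∀ (z : 𝕫) (v : 𝕍), J z (J z v) = -(‖z‖ ^ 2) • v)
    (hJnorm : ∀ (z : 𝕫) (v : 𝕍), ‖J z v‖ = ‖z‖ * ‖v‖) (br : 𝕍 →ₗ[ℝ] 𝕍 →ₗ[ℝ] 𝕫)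
    (hbr : ∀ (U V : 𝕍) (Z : 𝕫), ⟪br U V, Z⟫ = ⟪J Z U, V⟫) {v V₀ : 𝕍} {z : 𝕫} {s : ℝ}
    (hV₀ : s • V₀ + J z V₀ = (-2 : ℝ) • v) (v' : 𝕍) :
    ⟪v, v'⟫ + ⟪z, -(1 / 2 : ℝ) • br v' V₀⟫ + s * ((1 / 2) * ⟪v', V₀⟫) = 0 := by
  have hbr' : ⟪z, br v' V₀⟫ = -⟪v', J z V₀⟫ := by
    rw [real_inner_comm, hbr, real_inner_J_left_eq_neg J hJsq hJnorm]
  have hpair := congrArg (⟪v', ·⟫) hV₀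
  simp only [inner_add_right, inner_smul_right] at hpair
  rw [inner_smul_right, hbr', real_inner_comm v']
  linear_combination (1 / 2 : ℝ) * hpair

end CliffordModule

theorem stmt_14_general
    {𝕍 𝕫 : Type*} [NormedAddCommGroup 𝕍] [InnerProductSpace ℝ 𝕍]
    [NormedAddCommGroup 𝕫] [InnerProductSpace ℝ 𝕫]
    (J : 𝕫 →ₗ[ℝ] 𝕍 →ₗ[ℝ] 𝕍)
    (hJsq : ∀ (z : 𝕫) (v : 𝕍), J z (J z v) = -(‖z‖ ^ 2) • v)
    (hJnorm : ∀ (z : 𝕫) (v : 𝕍), ‖J z v‖ = ‖z‖ * ‖v‖)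
    (br : 𝕍 →ₗ[ℝ] 𝕍 →ₗ[ℝ] 𝕫)
    (hbr : ∀ (U V : 𝕍) (Z : 𝕫), ⟪br U V, Z⟫ = ⟪J Z U, V⟫)
    (v : 𝕍) (z : 𝕫) (s : ℝ)
    (hunit : ‖v‖ ^ 2 + ‖z‖ ^ 2 + s ^ 2 = 1)
    (hsz : s ^ 2 + ‖z‖ ^ 2 ≠ 0)
    (V₀ : 𝕍) (t₀ : ℝ)
    (hV₀ : V₀ = (-(2 * s / (s ^ 2 + ‖z‖ ^ 2))) • v + (2 / (s ^ 2 + ‖z‖ ^ 2)) • J z v)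
    (ht₀ : t₀ = -1 / (s ^ 2 + ‖z‖ ^ 2)) :
    t₀ = -1 - (1 / 4) * ‖V₀‖ ^ 2 ∧
    (‖(0 : 𝕍) - V₀‖ ^ 2 = -4 * (1 + t₀) ∧ (0 : 𝕫) = 0 - (1 / 2 : ℝ) • br 0 V₀) ∧
    v = -(1 / 2 : ℝ) • (s • V₀ + J z V₀) ∧
    (∀ (v' : 𝕍) (z' : 𝕫) (s' : ℝ), s' = (1 / 2) * ⟪v', V₀⟫ →
      z' = -(1 / 2 : ℝ) • br v' V₀ → ⟪v, v'⟫ + ⟪z, z'⟫ + s * s' = 0) := by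
  have hkey : s • V₀ + J z V₀ = (-2 : ℝ) • v :=
    hV₀ ▸ smul_add_J_endpoint_eq_neg_two_smul J hJsq hsz
  have hnorm : ‖V₀‖ ^ 2 = 4 * ‖v‖ ^ 2 / (s ^ 2 + ‖z‖ ^ 2) := by
    rw [eq_div_iff hsz, mul_comm, ← norm_smul_add_J_sq J hJsq hJnorm, hkey, norm_smul]
    norm_num [mul_pow]
  have ht₀' : t₀ = -1 - (1 / 4) * ‖V₀‖ ^ 2 := by
    rw [ht₀, hnorm]
    field_simp
    linear_combination hunit
  refine ⟨ht₀', ⟨?_, by simp⟩, ?_, ?_⟩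
  · rw [zero_sub, norm_neg, ht₀']
    ring
  · rw [hkey, smul_smul]
    norm_num
  · rintro v' z' s' rfl rfl
    exact inner_velocity_tangent_eq_zero J hJsq hJnorm br hbr hkey v'

/-- Let `(v,z,s)` be a unit vector with `s² + ‖z‖² ≠ 0`, and set
`V₀ = -(2s/(s²+‖z‖²)) v + (2/(s²+‖z‖²)) J_z v`, `t₀ = -1/(s²+‖z‖²)` (the endpoint
`γ(∞)` of the prolonged geodesic). Then `t₀ = -1 - ¼‖V₀‖²`, the point `e = (0,0,1)`
lies on the focal variety `F_{(V₀,0,t₀)}`, `v = -½(s V₀ + J_z V₀)`, and `(v,z,s)` is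
orthogonal to the tangent space
`T_e F = {(v',z',s') : s' = ½⟨v',V₀⟩, z' = -½[v',V₀]}`. -/
theorem stmt_14
    {𝕍 𝕫 : Type*} [NormedAddCommGroup 𝕍] [InnerProductSpace ℝ 𝕍] [FiniteDimensional ℝ 𝕍]
    [NormedAddCommGroup 𝕫] [InnerProductSpace ℝ 𝕫] [FiniteDimensional ℝ 𝕫]
    (J : 𝕫 →ₗ[ℝ] 𝕍 →ₗ[ℝ] 𝕍)
    (hJsq : ∀ (z : 𝕫) (v : 𝕍), J z (J z v) = -(‖z‖ ^ 2) • v)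
    (hJnorm : ∀ (z : 𝕫) (v : 𝕍), ‖J z v‖ = ‖z‖ * ‖v‖)
    (br : 𝕍 →ₗ[ℝ] 𝕍 →ₗ[ℝ] 𝕫)
    (hbr : ∀ (U V : 𝕍) (Z : 𝕫), ⟪br U V, Z⟫ = ⟪J Z U, V⟫)
    (v : 𝕍) (z : 𝕫) (s : ℝ)
    (hunit : ‖v‖ ^ 2 + ‖z‖ ^ 2 + s ^ 2 = 1)
    (hsz : s ^ 2 + ‖z‖ ^ 2 ≠ 0)
    (V₀ : 𝕍) (t₀ : ℝ)
    (hV₀ : V₀ = (-(2 * s / (s ^ 2 + ‖z‖ ^ 2))) • v + (2 / (s ^ 2 + ‖z‖ ^ 2)) • J z v)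
    (ht₀ : t₀ = -1 / (s ^ 2 + ‖z‖ ^ 2)) :
    t₀ = -1 - (1 / 4) * ‖V₀‖ ^ 2 ∧
    (‖(0 : 𝕍) - V₀‖ ^ 2 = -4 * (1 + t₀) ∧ (0 : 𝕫) = 0 - (1 / 2 : ℝ) • br 0 V₀) ∧
    v = -(1 / 2 : ℝ) • (s • V₀ + J z V₀) ∧
    (∀ (v' : 𝕍) (z' : 𝕫) (s' : ℝ), s' = (1 / 2) * ⟪v', V₀⟫ →
      z' = -(1 / 2 : ℝ) • br v' V₀ → ⟪v, v'⟫ + ⟪z, z'⟫ + s * s' = 0) :=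
  stmt_14_general J hJsq hJnorm br hbr v z s hunit hsz V₀ t₀ hV₀ ht₀
end
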